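/- For every [α] ∈ π₁(X,x₀), the left translation φ_α : π₁^wh(X,x₀) → π₁^wh(X,x₀), [β] ↦ [α∗β], is a homeomorphism; consequently π₁^wh(X,x₀) is a homogeneous space (the group acts transitively on itself by homeomorphisms via left translations). -/

import Mathlib

open CategoryTheory unitInterval Topology

universe u v

noncomputable section

attribute [local instance] Path.Homotopic.setoid

namespace GCPaper

variable {X : Type u} [TopologicalSpace X]

/-- The homotopy class of a loop, as an element of the fundamental group. -/
def loopClass {x : X} (γ : Path x x) : FundamentalGroup X x :=
  (Path.Homotopic.Quotient.mk γ : (⟨x⟩ : FundamentalGroupoid X) ⟶ ⟨x⟩)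

/-- The homomorphism on fundamental groups induced by a continuous map. -/
def π₁map {A B : Type u} [TopologicalSpace A] [TopologicalSpace B] (f : C(A, B)) (a : A) :
    FundamentalGroup A a →* FundamentalGroup B (f a) :=
  Functor.mapEnd (FundamentalGroupoid.mk (a : TopCat.of A))
    ((FundamentalGroupoid.fundamentalGroupoidFunctor.map (TopCat.ofHom f) :
        Grpd.of (FundamentalGroupoid (TopCat.of A)) ⟶ Grpd.of (FundamentalGroupoid (TopCat.of B))) :
      FundamentalGroupoid (TopCat.of A) ⥤ FundamentalGroupoid (TopCat.of B))

/-- Transport of the fundamental group along an equality of basepoints. -/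
def eqCast {x x' : X} (h : x = x') : FundamentalGroup X x ≃* FundamentalGroup X x' := by
  subst h; exact MulEquiv.refl _

/-- `f₁*π₁(A, a)`, the image of the fundamental group of `A` in the fundamental group of `B`,
based at a point `x` equal to `f a`. -/
def imageSubgroup {A : Type u} [TopologicalSpace A]
    (f : C(A, X)) (a : A) (x : X) (h : f a = x) : Subgroup (FundamentalGroup X x) :=
  Subgroup.map (eqCast h).toMonoidHom (π₁map f a).range

/-- `i_*π₁(U, x)`, the image of the fundamental group of `U` in the fundamental group of `X`
under the inclusion-induced homomorphism. -/
def iStar (x : X) (U : Set X) (hx : x ∈ U) : Subgroup (FundamentalGroup X x) :=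
  imageSubgroup ⟨(Subtype.val : U → X), continuous_subtype_val⟩ ⟨x, hx⟩ x rfl

/-- The set of homotopy classes of small loops at `x` :
loops which have a representative in every open neighbourhood of `x`. -/
def smallSet (x : X) : Set (FundamentalGroup X x) :=
  { g | ∀ (U : Set X) (_ : IsOpen U) (hx : x ∈ U), g ∈ iStar x U hx }

/-- Conjugation of a loop class at `x` along a path `α` from `x₀` to `x` :
`g ↦ [α ∗ g ∗ α⁻¹]`. -/
def conjAlong {x₀ x : X} (α : Path x₀ x) (g : FundamentalGroup X x) : FundamentalGroup X x₀ :=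
  (FundamentalGroup.fundamentalGroupMulEquivOfPath α).symm g

/-- The subgroup `[α⁻¹ H α]` of `π₁(X, x)` for a path `α` from `x₀` to `x` and
`H ≤ π₁(X, x₀)`. -/
def conjSubgroup {x₀ x : X} (α : Path x₀ x) (H : Subgroup (FundamentalGroup X x₀)) :
    Subgroup (FundamentalGroup X x) :=
  Subgroup.map (FundamentalGroup.fundamentalGroupMulEquivOfPath α).toMonoidHom H

/-- `π₁^sg(X, x₀)`: the subgroup generated by small loops conjugated along paths from `x₀`. -/
def sgSubgroup (x₀ : X) : Subgroup (FundamentalGroup X x₀) :=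
  Subgroup.closure { g | ∃ (x : X) (α : Path x₀ x) (s : FundamentalGroup X x),
    s ∈ smallSet x ∧ g = conjAlong α s }

/-- The Spanier group of an open cover. -/
def spanierGroup (x₀ : X) (𝒰 : Set (Set X)) : Subgroup (FundamentalGroup X x₀) :=
  Subgroup.closure { g | ∃ (x : X) (α : Path x₀ x) (U : Set X) (_ : U ∈ 𝒰) (β : Path x x),
    Set.range β ⊆ U ∧ g = conjAlong α (loopClass β) }

/-- `X` is semilocally small generated (at `x₀`). -/
def SemilocallySmallGenerated (x₀ : X) : Prop :=
  ∃ 𝒰 : Set (Set X), (∀ U ∈ 𝒰, IsOpen U) ∧ ⋃₀ 𝒰 = Set.univ ∧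
    spanierGroup x₀ 𝒰 ≤ sgSubgroup x₀

/-- `X` is homotopically Hausdorff relative to the subgroup `H`. -/
def HomotopicallyHausdorffRel (x₀ : X) (H : Subgroup (FundamentalGroup X x₀)) : Prop :=
  ∀ (x : X) (α : Path x₀ x) (g : FundamentalGroup X x₀), g ∉ H →
    ∃ U : Set X, IsOpen U ∧ x ∈ U ∧
      ∀ γ : Path x x, Set.range γ ⊆ U → ¬ ∃ h ∈ H, conjAlong α (loopClass γ) = h * g

/-- The quasitopological fundamental group topology: the quotient topology induced by the
compact-open topology on the loop space. -/
def qtop (X : Type u) [TopologicalSpace X] (x : X) : TopologicalSpace (FundamentalGroup X x) :=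
  TopologicalSpace.coinduced (fun γ : Path x x => loopClass γ) inferInstance

/-- The basic sets of the whisker topology on the fundamental group. -/
def whBasis (X : Type u) [TopologicalSpace X] (x₀ : X) : Set (Set (FundamentalGroup X x₀)) :=
  { S | ∃ (g : FundamentalGroup X x₀) (U : Set X) (_ : IsOpen U) (hx : x₀ ∈ U),
      S = (g * ·) '' (iStar x₀ U hx : Set (FundamentalGroup X x₀)) }

/-- The whisker topology on the fundamental group. -/
def whTop (X : Type u) [TopologicalSpace X] (x₀ : X) :
    TopologicalSpace (FundamentalGroup X x₀) :=
  TopologicalSpace.generateFrom (whBasis X x₀)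

/-- The unique lifting property for a pointed map `p : (X', x') → (X, p x')`. -/
def HasUL {X' : Type u} [TopologicalSpace X'] (p : C(X', X)) (x' : X') : Prop :=
  ∀ (Y : Type u) (_ : TopologicalSpace Y) (y : Y), ConnectedSpace Y → LocPathConnectedSpace Y →
    ∀ (f : C(Y, X)) (hf : f y = p x'),
      imageSubgroup f y (p x') hf ≤ imageSubgroup p x' (p x') rfl →
      ∃! g : C(Y, X'), g y = x' ∧ p.comp g = f

/-- `H` is a generalized covering subgroup of `π₁(X, x₀)`. -/
def IsGCSubgroup (x₀ : X) (H : Subgroup (FundamentalGroup X x₀)) : Prop :=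
  ∃ (X' : Type u) (_ : TopologicalSpace X') (x' : X') (p : C(X', X)) (hp : p x' = x₀),
    ConnectedSpace X' ∧ LocPathConnectedSpace X' ∧ HasUL p x' ∧ imageSubgroup p x' x₀ hp = H

/-- `π₁^gc(X, x₀)`: the intersection of all generalized covering subgroups. -/
def gcSubgroup (X : Type u) [TopologicalSpace X] (x₀ : X) : Subgroup (FundamentalGroup X x₀) :=
  sInf { H | IsGCSubgroup x₀ H }

/-- Unique path lifting: paths lift with prescribed initial point, and lifts with the same
initial point are unique. -/
def UniquePathLifts {X' : Type u} [TopologicalSpace X'] (p : X' → X) : Prop :=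
  (∀ (γ : C(I, X)) (x' : X'), p x' = γ 0 → ∃ γ' : C(I, X'), γ' 0 = x' ∧ p ∘ γ' = γ) ∧
  (∀ γ₁ γ₂ : C(I, X'), γ₁ 0 = γ₂ 0 → p ∘ γ₁ = p ∘ γ₂ → γ₁ = γ₂)

/-- `H` is a semicovering subgroup of `π₁(X, x₀)`. -/
def IsSemicoveringSubgroup (x₀ : X) (H : Subgroup (FundamentalGroup X x₀)) : Prop :=
  ∃ (X' : Type u) (_ : TopologicalSpace X') (x' : X') (p : C(X', X)) (hp : p x' = x₀),
    ConnectedSpace X' ∧ LocPathConnectedSpace X' ∧ Function.Surjective p ∧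
    IsLocalHomeomorph p ∧ UniquePathLifts (p : X' → X) ∧ imageSubgroup p x' x₀ hp = H

/-- `H` is a covering subgroup of `π₁(X, x₀)`. -/
def IsCoveringSubgroup (x₀ : X) (H : Subgroup (FundamentalGroup X x₀)) : Prop :=
  ∃ (X' : Type u) (_ : TopologicalSpace X') (x' : X') (p : C(X', X)) (hp : p x' = x₀),
    ConnectedSpace X' ∧ LocPathConnectedSpace X' ∧ IsCoveringMap p ∧ imageSubgroup p x' x₀ hp = H

/-- `X` is semilocally `K`-connected at `x`. -/
def SemilocallyConnectedAt (x : X) (K : Subgroup (FundamentalGroup X x)) : Prop :=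
  ∃ (U : Set X) (_ : IsOpen U) (hx : x ∈ U), iStar x U hx ≤ K

section WhiskerSpace

variable {X : Type u} [TopologicalSpace X] {x₀ : X}

/-- The space of paths in `X` starting at `x₀`, recorded with their endpoints. -/
def PathStar (x₀ : X) : Type u := Σ x : X, Path x₀ x

/-- The relation identifying two paths `α, β` from `x₀` when they have the same endpoint and
`[α ∗ β⁻¹] ∈ H`. -/
def whiskerRel (H : Subgroup (FundamentalGroup X x₀)) :
    PathStar x₀ → PathStar x₀ → Prop := fun a b =>
  ∃ h : b.1 = a.1, loopClass (a.2.trans (h ▸ b.2 : Path x₀ a.1).symm) ∈ H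

/-- The space `X̃_H` of `∼_H`-classes of paths starting at `x₀`. -/
def XH (H : Subgroup (FundamentalGroup X x₀)) : Type u := Quot (whiskerRel H)

/-- The endpoint projection `p_H : X̃_H → X`. -/
def pH (H : Subgroup (FundamentalGroup X x₀)) : XH H → X :=
  Quot.lift (fun a => a.1) (by rintro a b ⟨h, -⟩; exact h.symm)

/-- The point of `X̃_H` given by the class of a path from `x₀`. -/
def XH.mk (H : Subgroup (FundamentalGroup X x₀)) (a : PathStar x₀) : XH H :=
  Quot.mk (whiskerRel H) a

/-- The basepoint `ẽ_H` of `X̃_H`: the class of the constant path at `x₀`. -/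
def eH (H : Subgroup (FundamentalGroup X x₀)) : XH H :=
  XH.mk H ⟨x₀, Path.refl x₀⟩

/-- The basic set `(U, ⟨α⟩_H)` of the whisker topology on `X̃_H`: classes of continuations of
`α` inside `U`. -/
def contSet (H : Subgroup (FundamentalGroup X x₀)) (a : PathStar x₀) (U : Set X) :
    Set (XH H) :=
  { z | ∃ (y : X) (γ : Path a.1 y), Set.range γ ⊆ U ∧ z = XH.mk H ⟨y, a.2.trans γ⟩ }

/-- The whisker topology on `X̃_H`. -/
instance XH.topologicalSpace (H : Subgroup (FundamentalGroup X x₀)) :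
    TopologicalSpace (XH H) :=
  TopologicalSpace.generateFrom
    { S | ∃ (a : PathStar x₀) (U : Set X), IsOpen U ∧ S = contSet H a U }

lemma XH.mk_trans_refl (H : Subgroup (FundamentalGroup X x₀)) (a : PathStar x₀) :
    XH.mk H ⟨a.1, a.2.trans (Path.refl a.1)⟩ = XH.mk H a := by
  apply Quot.sound
  refine ⟨rfl, ?_⟩
  have h1 : (a.2.trans (Path.refl a.1)).Homotopic a.2 := ⟨Path.Homotopy.transRefl a.2⟩
  have h2 : ((a.2.trans (Path.refl a.1)).trans a.2.symm).Homotopic (a.2.trans a.2.symm) :=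
    h1.hcomp (Path.Homotopic.refl _)
  have h3 : (a.2.trans a.2.symm).Homotopic (Path.refl x₀) :=
    ⟨(Path.Homotopy.reflTransSymm a.2).symm⟩
  have : loopClass ((a.2.trans (Path.refl a.1)).trans a.2.symm) = 1 := by
    exact (Quotient.sound (h2.trans h3) : _ = (Path.Homotopic.Quotient.mk (Path.refl x₀) : Path.Homotopic.Quotient x₀ x₀))
  exact this ▸ H.one_mem

lemma continuous_pH (H : Subgroup (FundamentalGroup X x₀)) : Continuous (pH H) := by
  rw [continuous_def]
  intro U hU
  have : pH H ⁻¹' U = ⋃ (a : PathStar x₀) (_ : a.1 ∈ U), contSet H a U := by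
    ext z
    constructor
    · intro hz
      obtain ⟨a, rfl⟩ := Quot.exists_rep z
      refine Set.mem_iUnion₂.mpr ⟨a, hz, a.1, Path.refl a.1, ?_, (XH.mk_trans_refl H a).symm⟩
      rw [Path.refl_range]
      exact Set.singleton_subset_iff.mpr hz
    · intro hz
      obtain ⟨a, ha, y, γ, hγ, rfl⟩ := Set.mem_iUnion₂.mp hz
      have : y ∈ U := hγ ⟨1, γ.target⟩
      exact this
  rw [this]
  exact isOpen_iUnion fun a => isOpen_iUnion fun ha =>
    TopologicalSpace.isOpen_generateFrom_of_mem ⟨a, U, hU, rfl⟩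

/-- The endpoint projection `p_H` as a continuous map. -/
def pHMap (H : Subgroup (FundamentalGroup X x₀)) : C(XH H, X) :=
  ⟨pH H, continuous_pH H⟩

end WhiskerSpace

end GCPaper

open GCPaper

section LeftTranslation

variable {G : Type*} [Group G]

lemma continuous_mul_left_generateFrom {B : Set (Set G)}
    (hB : ∀ (a : G), ∀ S ∈ B, (a * ·) ⁻¹' S ∈ B) (a : G) :
    Continuous[.generateFrom B, .generateFrom B] (a * ·) := by
  let := TopologicalSpace.generateFrom B
  exact continuous_generateFrom_iff.mpr fun S hS =>
    TopologicalSpace.isOpen_generateFrom_of_mem (hB a S hS)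

lemma isHomeomorph_mul_left_generateFrom {B : Set (Set G)}
    (hB : ∀ (a : G), ∀ S ∈ B, (a * ·) ⁻¹' S ∈ B) (a : G) :
    @IsHomeomorph _ _ (.generateFrom B) (.generateFrom B) (a * ·) := by
  let := TopologicalSpace.generateFrom B
  rw [← Equiv.coe_mulLeft, Equiv.isHomeomorph_iff, Equiv.mulLeft_symm]
  exact ⟨continuous_mul_left_generateFrom hB a, continuous_mul_left_generateFrom hB a⁻¹⟩

lemma preimage_mul_left_image_mul_left (a g : G) (S : Set G) :
    (a * ·) ⁻¹' ((g * ·) '' S) = ((a⁻¹ * g) * ·) '' S := by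
  rw [← Set.image_mul_left', Set.image_image]
  simp only [mul_assoc]

end LeftTranslation

namespace GCPaper

lemma preimage_mul_left_mem_whBasis {X : Type u} [TopologicalSpace X] {x₀ : X}
    (a : FundamentalGroup X x₀) {S : Set (FundamentalGroup X x₀)} (hS : S ∈ whBasis X x₀) :
    (a * ·) ⁻¹' S ∈ whBasis X x₀ := by
  obtain ⟨g, U, hU, hx, rfl⟩ := hS
  exact ⟨a⁻¹ * g, U, hU, hx, preimage_mul_left_image_mul_left a g _⟩

end GCPaper

/-- Every left translation of `π₁^wh(X,x₀)` is a homeomorphism; consequently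
`π₁^wh(X,x₀)` is a homogeneous space: the group acts transitively on itself by homeomorphisms
via left translations. -/
theorem statement_10 {X : Type u} [TopologicalSpace X] (x₀ : X) :
    (∀ a : FundamentalGroup X x₀,
      @IsHomeomorph _ _ (whTop X x₀) (whTop X x₀) (fun b => a * b)) ∧
    ∀ g₁ g₂ : FundamentalGroup X x₀, ∃ a : FundamentalGroup X x₀, a * g₁ = g₂ :=
  ⟨isHomeomorph_mul_left_generateFrom fun a _ => preimage_mul_left_mem_whBasis a,
    fun g₁ g₂ => ⟨g₂ * g₁⁻¹, inv_mul_cancel_right g₂ g₁⟩⟩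

end
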